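/- Let K ≥ 1, n ≥ 1, and 0 < λ_1 ≤ λ_2 ≤ … ≤ λ_K, with mutually independent exponential job durations as in the scheduling instance. Define f_K(λ) = ( 2·Σ_{ℓ=1}^K Σ_{k=ℓ+1}^K λ_k λ_ℓ/(λ_k + λ_ℓ) − Σ_{ℓ=1}^K (K − ℓ)·λ_ℓ ) / ( Σ_{ℓ=1}^K λ_ℓ/4 + Σ_{ℓ=1}^K Σ_{k=ℓ+1}^K λ_k λ_ℓ/(λ_k + λ_ℓ) ). Then E[C_FTPP] ≤ (2 − f_K(λ))·E[C_OPT]. -/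

import Mathlib

open MeasureTheory ProbabilityTheory Finset

/-!
Both expectations are explicit. A job of type `k` has mean `λ_k`, and the minimum of two
independent exponential durations is exponential with the sum of the two rates, so its mean is
`λ_k λ_ℓ / (λ_k + λ_ℓ)`. Since FTPP sorts by mean, it charges each pair of jobs the smaller of the
two means. Grouping the `n²` pairs of jobs of two distinct types and the `n(n-1)/2` pairs of jobs
of a common type, with `S = Σ λ_ℓ`, `M = Σ_{ℓ<k} λ_k λ_ℓ / (λ_k + λ_ℓ)` and
`T = Σ_ℓ (K - ℓ) λ_ℓ`, one gets
`E[C_FTPP] ≤ n S + n² T + (n² - n) S / 2` and `E[C_OPT] = n S + n² M + (n² - n) S / 4`.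
Since `0 ≤ M ≤ T`, what remains is an elementary inequality in `n, S, M, T`.
-/

open Real

lemma ae_nonneg_expMeasure (r : ℝ) : ∀ᵐ x ∂expMeasure r, 0 ≤ x := by
  refine ae_iff.2 ?_
  simp only [not_le]
  change expMeasure r (Set.Iio 0) = 0
  rw [expMeasure, gammaMeasure, withDensity_apply _ measurableSet_Iio]
  exact lintegral_gammaPDF_of_nonpos le_rfl

lemma expMeasure_Ioi {r x : ℝ} (hr : 0 < r) (hx : 0 ≤ x) :
    expMeasure r (Set.Ioi x) = ENNReal.ofReal (exp (-(r * x))) := by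
  have := isProbabilityMeasure_expMeasure hr
  have hexp : exp (-(r * x)) ≤ 1 := exp_le_one_iff.2 <| neg_nonpos.2 <| mul_nonneg hr.le hx
  rw [← Set.compl_Iic, prob_compl_eq_one_sub measurableSet_Iic, ← ofReal_cdf,
    cdf_expMeasure_eq hr, if_pos hx, ← ENNReal.ofReal_one,
    ← ENNReal.ofReal_sub _ (sub_nonneg.2 hexp), sub_sub_cancel]

/-- Exponential tail of rate `r`. Unlike `μ.map X = expMeasure r`, this is preserved by minima of
independent variables. -/
structure HasExpTail {Ω : Type*} [MeasurableSpace Ω] (μ : Measure Ω) (X : Ω → ℝ) (r : ℝ) :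
    Prop where
  aemeasurable : AEMeasurable X μ
  ae_nonneg : ∀ᵐ ω ∂μ, 0 ≤ X ω
  measure_lt : ∀ t, 0 < t → μ {ω | t < X ω} = ENNReal.ofReal (exp (-(r * t)))

section ExpTail

variable {Ω : Type*} [MeasurableSpace Ω] {μ : Measure Ω} {X Y : Ω → ℝ} {r s : ℝ}

lemma hasExpTail_of_map_eq_expMeasure (hX : Measurable X) (hr : 0 < r)
    (h : μ.map X = expMeasure r) : HasExpTail μ X r where
  aemeasurable := hX.aemeasurable
  ae_nonneg := ae_of_ae_map hX.aemeasurable (h ▸ ae_nonneg_expMeasure r)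
  measure_lt t ht := by
    rw [← expMeasure_Ioi hr ht.le, ← h, Measure.map_apply hX measurableSet_Ioi]
    rfl

lemma IndepFun.hasExpTail_min (hXY : IndepFun X Y μ) (hX : HasExpTail μ X r)
    (hY : HasExpTail μ Y s) : HasExpTail μ (fun ω ↦ min (X ω) (Y ω)) (r + s) where
  aemeasurable := hX.aemeasurable.min hY.aemeasurable
  ae_nonneg := by
    filter_upwards [hX.ae_nonneg, hY.ae_nonneg] with ω hXω hYω
    exact le_min hXω hYω
  measure_lt t ht := by
    have hset : {ω | t < min (X ω) (Y ω)} = X ⁻¹' Set.Ioi t ∩ Y ⁻¹' Set.Ioi t := by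
      ext ω
      simp
    rw [hset, hXY.measure_inter_preimage_eq_mul _ _ measurableSet_Ioi measurableSet_Ioi]
    change μ {ω | t < X ω} * μ {ω | t < Y ω} = _
    rw [hX.measure_lt t ht, hY.measure_lt t ht, ← ENNReal.ofReal_mul (exp_pos _).le, ← exp_add]
    ring_nf

namespace HasExpTail

lemma lintegral_ofReal_eq (hX : HasExpTail μ X r) :
    ∫⁻ ω, ENNReal.ofReal (X ω) ∂μ = ∫⁻ t in Set.Ioi 0, ENNReal.ofReal (exp (-(r * t))) := by
  rw [lintegral_eq_lintegral_meas_lt μ hX.ae_nonneg hX.aemeasurable]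
  exact setLIntegral_congr_fun measurableSet_Ioi hX.measure_lt

lemma integrable (hX : HasExpTail μ X r) (hr : 0 < r) : Integrable X μ := by
  have hexp : IntegrableOn (fun t ↦ exp (-(r * t))) (Set.Ioi 0) := by
    simpa only [neg_mul] using exp_neg_integrableOn_Ioi 0 hr
  refine ⟨hX.aemeasurable.aestronglyMeasurable, ?_⟩
  rw [hasFiniteIntegral_iff_ofReal hX.ae_nonneg, hX.lintegral_ofReal_eq,
    ← ofReal_integral_eq_lintegral_ofReal hexp (ae_of_all _ fun t ↦ (exp_pos _).le)]
  exact ENNReal.ofReal_lt_top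

lemma integral_eq (hX : HasExpTail μ X r) (hr : 0 < r) : ∫ ω, X ω ∂μ = r⁻¹ := by
  rw [(hX.integrable hr).integral_eq_integral_meas_lt hX.ae_nonneg]
  calc ∫ t in Set.Ioi 0, μ.real {ω | t < X ω}
      = ∫ t in Set.Ioi 0, exp (-(r * t)) := by
        refine setIntegral_congr_fun measurableSet_Ioi fun t ht ↦ ?_
        rw [measureReal_def, hX.measure_lt t ht, ENNReal.toReal_ofReal (exp_pos _).le]
    _ = r⁻¹ := by
      simpa using Real.integral_rpow_mul_exp_neg_mul_Ioi (a := 1) one_pos hr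

end HasExpTail

end ExpTail

section Pairs

variable {ι κ τ : Type*} [Fintype ι] [Fintype κ] [Fintype τ]

lemma sum_comp_equiv_fst {R : Type*} [CommSemiring R] (e : ι ≃ κ × τ) (F : κ → R) :
    ∑ i, F (e i).1 = Fintype.card τ * ∑ k, F k := by
  rw [e.sum_comp (fun p ↦ F p.1), Fintype.sum_prod_type, mul_sum]
  simp [mul_comm]

variable [LinearOrder ι] [LocallyFiniteOrderTop ι] [LocallyFiniteOrderBot ι]

lemma sum_sum_Iic_eq_sum_add_sum_sum_Ioi {M : Type*} [AddCommMonoid M] (g : ι → M) :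
    ∑ a, ∑ b ∈ Iic a, g b = ∑ b, g b + ∑ b, ∑ _a ∈ Ioi b, g b := by
  rw [sum_comm' (t' := univ) (s' := Ici) (by simp), ← sum_add_distrib]
  exact sum_congr rfl fun b _ ↦ (add_sum_Ioi_eq_sum_Ici (f := fun _ ↦ g b) b).symm

lemma two_mul_sum_sum_Ioi {R : Type*} [CommRing R] (f : ι → ι → R)
    (hf : ∀ i j, f i j = f j i) :
    2 * ∑ i, ∑ j ∈ Ioi i, f i j = ∑ i, ∑ j, f i j - ∑ i, f i i :=
  calc 2 * ∑ i, ∑ j ∈ Ioi i, f i j = ∑ i, ∑ j ∈ Ioi i, (f j i + f i j) := by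
        simp only [mul_sum, two_mul]
        exact sum_congr rfl fun i _ ↦ sum_congr rfl fun j _ ↦ by rw [hf j i]
    _ = ∑ i, ∑ j ∈ {i}ᶜ, f j i := sum_sum_Ioi_add_eq_sum_sum_off_diag f
    _ = ∑ i, (∑ j, f j i - f i i) := sum_congr rfl fun i _ ↦ by
        rw [← sum_compl_add_sum {i}, sum_singleton, add_sub_cancel_right]
    _ = ∑ i, ∑ j, f i j - ∑ i, f i i := by rw [sum_sub_distrib, sum_comm]

lemma sum_sum_Ioi_comp_equiv_fst [LinearOrder κ] [LocallyFiniteOrderTop κ]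
    [LocallyFiniteOrderBot κ] (e : ι ≃ κ × τ) (G : κ → κ → ℝ) (hG : ∀ k l, G k l = G l k) :
    ∑ i, ∑ j ∈ Ioi i, G (e i).1 (e j).1 =
      (Fintype.card τ : ℝ) ^ 2 * ∑ k, ∑ l ∈ Ioi k, G k l +
        ((Fintype.card τ : ℝ) ^ 2 - Fintype.card τ) / 2 * ∑ k, G k k := by
  have hjobs := two_mul_sum_sum_Ioi (fun i j ↦ G (e i).1 (e j).1) fun i j ↦ hG _ _
  have htypes := two_mul_sum_sum_Ioi G hG
  have hfull : ∑ i, ∑ j, G (e i).1 (e j).1 =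
      (Fintype.card τ : ℝ) ^ 2 * ∑ k, ∑ l, G k l := by
    simp only [sum_comp_equiv_fst e (G _), ← mul_sum]
    rw [sum_comp_equiv_fst e fun k ↦ ∑ l, G k l]
    ring
  rw [hfull, sum_comp_equiv_fst e fun k ↦ G k k] at hjobs
  linear_combination (hjobs - (Fintype.card τ : ℝ) ^ 2 * htypes) / 2

lemma sum_sum_Iic_comp_equiv_fst [LinearOrder κ] [LocallyFiniteOrderTop κ]
    [LocallyFiniteOrderBot κ] (e : ι ≃ κ × τ) (lam : κ → ℝ)
    (hsorted : ∀ a b, a ≤ b → lam (e a).1 ≤ lam (e b).1) :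
    ∑ a, ∑ b ∈ Iic a, lam (e b).1 =
      Fintype.card τ * ∑ k, lam k +
        (Fintype.card τ : ℝ) ^ 2 * ∑ k, ∑ l ∈ Ioi k, min (lam k) (lam l) +
        ((Fintype.card τ : ℝ) ^ 2 - Fintype.card τ) / 2 * ∑ k, lam k := by
  have hmin : ∑ b, ∑ a ∈ Ioi b, lam (e b).1 =
      ∑ b, ∑ a ∈ Ioi b, min (lam (e b).1) (lam (e a).1) :=
    sum_congr rfl fun b _ ↦ sum_congr rfl fun a ha ↦
      (min_eq_left (hsorted b a (mem_Ioi.1 ha).le)).symm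
  rw [sum_sum_Iic_eq_sum_add_sum_sum_Ioi, hmin, sum_comp_equiv_fst e,
    sum_sum_Ioi_comp_equiv_fst e (fun k l ↦ min (lam k) (lam l)) fun _ _ ↦ min_comm _ _,
    add_assoc]
  simp only [min_self]

lemma sum_add_sum_sum_Ioi_harmonic_comp_equiv_fst [LinearOrder κ] [LocallyFiniteOrderTop κ]
    [LocallyFiniteOrderBot κ] (e : ι ≃ κ × τ) (lam : κ → ℝ) :
    ∑ j, lam (e j).1 +
        ∑ i, ∑ j ∈ Ioi i, lam (e i).1 * lam (e j).1 / (lam (e i).1 + lam (e j).1) =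
      Fintype.card τ * ∑ k, lam k +
        (Fintype.card τ : ℝ) ^ 2 * ∑ l, ∑ k ∈ Ioi l, lam k * lam l / (lam k + lam l) +
        ((Fintype.card τ : ℝ) ^ 2 - Fintype.card τ) / 2 * ((∑ k, lam k) / 2) := by
  have hdiag (x : ℝ) : x * x / (x + x) = x / 2 := by
    rcases eq_or_ne x 0 with rfl | hx
    · simp
    · field_simp
      ring
  rw [sum_comp_equiv_fst e, sum_sum_Ioi_comp_equiv_fst e (fun k l ↦ lam k * lam l / (lam k + lam l))
      fun _ _ ↦ by rw [mul_comm, add_comm], add_assoc]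
  simp only [hdiag, ← sum_div]
  congr 3
  exact sum_congr rfl fun k _ ↦ sum_congr rfl fun l _ ↦ by rw [mul_comm, add_comm]

end Pairs

lemma sum_sum_Ioi_min_le {K : ℕ} (lam : Fin K → ℝ) :
    ∑ k, ∑ l ∈ Ioi k, min (lam k) (lam l) ≤ ∑ k : Fin K, ((K : ℝ) - ((k : ℕ) + 1)) * lam k := by
  refine sum_le_sum fun k _ ↦ (sum_le_sum fun l _ ↦ min_le_left _ _).trans_eq ?_
  rw [sum_const, Fin.card_Ioi, nsmul_eq_mul, Nat.sub_sub, Nat.cast_sub (by omega)]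
  push_cast
  ring

lemma mul_div_add_le_min {x y : ℝ} (hx : 0 < x) (hy : 0 < y) : x * y / (x + y) ≤ min x y := by
  refine le_min ?_ ?_ <;> rw [div_le_iff₀ (add_pos hx hy)] <;> nlinarith

lemma ratio_bound_of_expected_costs {n S M T' T : ℝ} (hn : 0 ≤ n) (hS : 0 < S) (hM : 0 ≤ M)
    (hMT : M ≤ T) (hT' : T' ≤ T) :
    n * S + n ^ 2 * T' + (n ^ 2 - n) / 2 * S ≤
      (2 - (2 * M - T) / (S / 4 + M)) * (n * S + n ^ 2 * M + (n ^ 2 - n) / 2 * (S / 2)) := by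
  have hD : 0 < S / 4 + M := by positivity
  have key : (2 * M - T) / (S / 4 + M) * (n * S + n ^ 2 * M + (n ^ 2 - n) / 2 * (S / 2)) ≤
      n * S + n ^ 2 * (2 * M - T) := by
    rw [div_mul_eq_mul_div, div_le_iff₀ hD]
    -- the slack is `n S (S/4 + 3T/4 - M/2)`
    nlinarith [mul_nonneg (mul_nonneg hn hS.le) (by linarith : 0 ≤ S / 4 + 3 * T / 4 - M / 2)]
  nlinarith [mul_le_mul_of_nonneg_left hT' (sq_nonneg n)]

section ExpectedFlowTime

variable {Ω ι : Type*} [MeasurableSpace Ω] {μ : Measure Ω} [Fintype ι] [LinearOrder ι]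
  {X : ι → Ω → ℝ} {m : ι → ℝ}

lemma integral_sum_sum_Iic [LocallyFiniteOrderBot ι] (hX : ∀ i, HasExpTail μ (X i) (m i)⁻¹)
    (hm : ∀ i, 0 < m i) :
    ∫ ω, ∑ a, ∑ b ∈ Iic a, X b ω ∂μ = ∑ a, ∑ b ∈ Iic a, m b := by
  have hint i : Integrable (X i) μ := (hX i).integrable (inv_pos.2 (hm i))
  rw [integral_finsetSum _ fun a _ ↦ integrable_finsetSum _ fun b _ ↦ hint b]
  refine sum_congr rfl fun a _ ↦ ?_
  rw [integral_finsetSum _ fun b _ ↦ hint b]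
  exact sum_congr rfl fun b _ ↦ by rw [(hX b).integral_eq (inv_pos.2 (hm b)), inv_inv]

lemma integral_sum_add_sum_sum_Ioi_min [LocallyFiniteOrderTop ι]
    (hX : ∀ i, HasExpTail μ (X i) (m i)⁻¹) (hm : ∀ i, 0 < m i)
    (hind : Pairwise fun i j ↦ IndepFun (X i) (X j) μ) :
    ∫ ω, (∑ j, X j ω + ∑ i, ∑ j ∈ Ioi i, min (X i ω) (X j ω)) ∂μ =
      ∑ j, m j + ∑ i, ∑ j ∈ Ioi i, m i * m j / (m i + m j) := by
  have hrate i : 0 < (m i)⁻¹ := inv_pos.2 (hm i)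
  have hmin {i j : ι} (hij : i < j) :
      HasExpTail μ (fun ω ↦ min (X i ω) (X j ω)) ((m i)⁻¹ + (m j)⁻¹) :=
    IndepFun.hasExpTail_min (hind hij.ne) (hX i) (hX j)
  have hint i : Integrable (X i) μ := (hX i).integrable (hrate i)
  have hint_min i : ∀ j ∈ Ioi i, Integrable (fun ω ↦ min (X i ω) (X j ω)) μ :=
    fun j hj ↦ (hmin (mem_Ioi.1 hj)).integrable (add_pos (hrate i) (hrate j))
  rw [integral_add (integrable_finsetSum _ fun j _ ↦ hint j)
      (integrable_finsetSum _ fun i _ ↦ integrable_finsetSum _ (hint_min i)),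
    integral_finsetSum _ fun j _ ↦ hint j,
    integral_finsetSum _ fun i _ ↦ integrable_finsetSum _ (hint_min i)]
  congr 1
  · exact sum_congr rfl fun j _ ↦ by rw [(hX j).integral_eq (hrate j), inv_inv]
  · refine sum_congr rfl fun i _ ↦ ?_
    rw [integral_finsetSum _ (hint_min i)]
    refine sum_congr rfl fun j hj ↦ ?_
    rw [(hmin (mem_Ioi.1 hj)).integral_eq (add_pos (hrate i) (hrate j)),
      inv_add_inv (hm i).ne' (hm j).ne', inv_div]

end ExpectedFlowTime

theorem stmt_5_general
    {Ω : Type*} [MeasurableSpace Ω] (μ : Measure Ω)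
    (K n : ℕ) (hK : 1 ≤ K)
    (lam : Fin K → ℝ) (hpos : ∀ k, 0 < lam k)
    (P : Fin K → Fin n → Ω → ℝ)
    (hmeas : ∀ k i, Measurable (P k i))
    (hdist : ∀ k i, Measure.map (P k i) μ = expMeasure (1 / lam k))
    (hindep : iIndepFun
      (fun p : Fin K × Fin n => P p.1 p.2) μ)
    (e : Fin (n * K) ≃ Fin K × Fin n)
    -- the enumeration lists the jobs in nondecreasing order of their means
    (he : ∀ a b : Fin (n * K), a ≤ b → lam (e a).1 ≤ lam (e b).1)
    (CFTPP COPT : Ω → ℝ)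
    (hCFTPP : ∀ ω, CFTPP ω =
      ∑ a : Fin (n * K), ∑ b ∈ Finset.Iic a, P (e b).1 (e b).2 ω)
    (hCOPT : ∀ ω, COPT ω =
      (∑ j : Fin (n * K), P (e j).1 (e j).2 ω) +
      ∑ i : Fin (n * K), ∑ j ∈ Finset.Ioi i,
        min (P (e i).1 (e i).2 ω) (P (e j).1 (e j).2 ω))
    (f : ℝ)
    (hf : f = (2 * (∑ l, ∑ k ∈ Finset.Ioi l, lam k * lam l / (lam k + lam l)) -
        ∑ l : Fin K, ((K : ℝ) - ((l : ℕ) + 1)) * lam l) /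
      ((∑ l, lam l / 4) +
        ∑ l, ∑ k ∈ Finset.Ioi l, lam k * lam l / (lam k + lam l))) :
    ∫ ω, CFTPP ω ∂μ ≤ (2 - f) * ∫ ω, COPT ω ∂μ := by
  have hX a : HasExpTail μ (P (e a).1 (e a).2) (lam (e a).1)⁻¹ :=
    hasExpTail_of_map_eq_expMeasure (hmeas _ _) (inv_pos.2 (hpos _)) (by rw [hdist, one_div])
  have hind : Pairwise fun a b ↦ IndepFun (P (e a).1 (e a).2) (P (e b).1 (e b).2) μ :=
    fun a b hab ↦ hindep.indepFun (e.injective.ne hab)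
  have hS : 0 < ∑ l, lam l := sum_pos (fun k _ ↦ hpos k) ⟨⟨0, hK⟩, mem_univ _⟩
  have hM : 0 ≤ ∑ l, ∑ k ∈ Ioi l, lam k * lam l / (lam k + lam l) :=
    sum_nonneg fun l _ ↦ sum_nonneg fun k _ ↦ (div_pos (mul_pos (hpos k) (hpos l))
      (add_pos (hpos k) (hpos l))).le
  have hMT : ∑ l, ∑ k ∈ Ioi l, lam k * lam l / (lam k + lam l) ≤
      ∑ k, ∑ l ∈ Ioi k, min (lam k) (lam l) :=
    sum_le_sum fun l _ ↦ sum_le_sum fun k _ ↦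
      (mul_div_add_le_min (hpos k) (hpos l)).trans_eq (min_comm _ _)
  simp only [hCFTPP, hCOPT]
  rw [integral_sum_sum_Iic hX fun _ ↦ hpos _,
    integral_sum_add_sum_sum_Ioi_min hX (fun _ ↦ hpos _) hind,
    sum_sum_Iic_comp_equiv_fst e lam he, sum_add_sum_sum_Ioi_harmonic_comp_equiv_fst e lam, hf,
    ← sum_div, Fintype.card_fin]
  exact ratio_bound_of_expected_costs (Nat.cast_nonneg n) hS hM
    (hMT.trans (sum_sum_Ioi_min_le lam)) (sum_sum_Ioi_min_le lam)

/-- Competitive ratio bound for FTPP with `K` job types: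
`E[C_FTPP] ≤ (2 - f_K(λ)) * E[C_OPT]`. -/
theorem stmt_5
    {Ω : Type*} [MeasurableSpace Ω] (μ : Measure Ω) [IsProbabilityMeasure μ]
    (K n : ℕ) (hK : 1 ≤ K) (hn : 1 ≤ n)
    (lam : Fin K → ℝ) (hpos : ∀ k, 0 < lam k) (hmono : Monotone lam)
    (P : Fin K → Fin n → Ω → ℝ)
    (hmeas : ∀ k i, Measurable (P k i))
    (hdist : ∀ k i, Measure.map (P k i) μ = expMeasure (1 / lam k))
    (hindep : iIndepFun
      (fun p : Fin K × Fin n => P p.1 p.2) μ)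
    (e : Fin (n * K) ≃ Fin K × Fin n)
    -- the enumeration lists the jobs in nondecreasing order of their means
    (he : ∀ a b : Fin (n * K), a ≤ b → lam (e a).1 ≤ lam (e b).1)
    (CFTPP COPT : Ω → ℝ)
    (hCFTPP : ∀ ω, CFTPP ω =
      ∑ a : Fin (n * K), ∑ b ∈ Finset.Iic a, P (e b).1 (e b).2 ω)
    (hCOPT : ∀ ω, COPT ω =
      (∑ j : Fin (n * K), P (e j).1 (e j).2 ω) +
      ∑ i : Fin (n * K), ∑ j ∈ Finset.Ioi i,
        min (P (e i).1 (e i).2 ω) (P (e j).1 (e j).2 ω))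
    (f : ℝ)
    (hf : f = (2 * (∑ l, ∑ k ∈ Finset.Ioi l, lam k * lam l / (lam k + lam l)) -
        ∑ l : Fin K, ((K : ℝ) - ((l : ℕ) + 1)) * lam l) /
      ((∑ l, lam l / 4) +
        ∑ l, ∑ k ∈ Finset.Ioi l, lam k * lam l / (lam k + lam l))) :
    ∫ ω, CFTPP ω ∂μ ≤ (2 - f) * ∫ ω, COPT ω ∂μ :=
  stmt_5_general μ K n hK lam hpos P hmeas hdist hindep e he CFTPP COPT hCFTPP hCOPT f hf
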